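/- In the ring R[t₁,t₂] of polynomials in two variables over a commutative ring R, for natural numbers α₁ < ⋯ < α_m with gcd d, the element t₁^{α_m+d} - t₂^{α_m+d} lies in the integral closure of the ideal generated by t₁^{α₁} - t₂^{α₁}, ..., t₁^{α_m} - t₂^{α_m}, provided R is noetherian. -/

import Mathlib

open MvPolynomial

/-- `t` lies in the integral closure of the ideal `I`. -/
def MemIdealIntegralClosure {T : Type*} [CommRing T] (I : Ideal T) (t : T) : Prop :=
  ∃ n : ℕ, 0 < n ∧ ∃ c : ℕ → T, (∀ i, c i ∈ I ^ i) ∧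
    t ^ n + ∑ i ∈ Finset.range n, c (i + 1) * t ^ (n - (i + 1)) = 0

namespace PowDiffAux

variable (R : Type*) [CommRing R]

/-- `P n = x^n - y^n`. -/
noncomputable def P (n : ℕ) : MvPolynomial (Fin 2) R :=
  (X 0 : MvPolynomial (Fin 2) R) ^ n - (X 1 : MvPolynomial (Fin 2) R) ^ n

lemma P_add (m n : ℕ) :
    P R (m + n) = (X 0 : MvPolynomial (Fin 2) R) ^ n * P R m + (X 1 : MvPolynomial (Fin 2) R) ^ m * P R n := by
  simp only [P, pow_add]
  ring

lemma P_zero : P R 0 = 0 := by simp [P]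

/-- The maximal ideal `(x, y)`. -/
noncomputable def mm : Ideal (MvPolynomial (Fin 2) R) :=
  Ideal.span {X 0, X 1}

lemma mon_mem (i j : ℕ) :
    (X 0 : MvPolynomial (Fin 2) R) ^ i * (X 1 : MvPolynomial (Fin 2) R) ^ j ∈ mm R ^ (i + j) := by
  rw [pow_add]
  exact Ideal.mul_mem_mul
    (Ideal.pow_mem_pow (Ideal.subset_span (by simp)) i)
    (Ideal.pow_mem_pow (Ideal.subset_span (by simp)) j)

lemma mpow_le (N : ℕ) :
    mm R ^ N ≤ Ideal.span (Set.range fun i : Fin (N + 1) =>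
      (X 0 : MvPolynomial (Fin 2) R) ^ (i : ℕ) * (X 1 : MvPolynomial (Fin 2) R) ^ (N - (i : ℕ))) := by
  induction N with
  | zero =>
      have h1 : (1 : MvPolynomial (Fin 2) R) ∈ Ideal.span (Set.range fun i : Fin 1 =>
          (X 0 : MvPolynomial (Fin 2) R) ^ (i : ℕ) * (X 1 : MvPolynomial (Fin 2) R) ^ (0 - (i : ℕ))) := by
        apply Ideal.subset_span
        exact ⟨0, by simp⟩
      rw [pow_zero, Ideal.one_eq_top, top_le_iff, Ideal.eq_top_iff_one]
      exact h1
  | succ N ih =>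
      rw [pow_succ]
      refine le_trans (Ideal.mul_mono ih le_rfl) ?_
      rw [mm, Ideal.span_mul_span']
      rw [Ideal.span_le]
      rintro z ⟨u, ⟨i, rfl⟩, v, hv, rfl⟩
      rcases hv with hv | hv
      · -- v = X 0
        subst hv
        apply Ideal.subset_span
        refine ⟨⟨(i : ℕ) + 1, by omega⟩, ?_⟩
        show (X 0 : MvPolynomial (Fin 2) R) ^ ((i : ℕ) + 1) * (X 1) ^ (N + 1 - ((i : ℕ) + 1)) = _
        have h2 : N + 1 - ((i : ℕ) + 1) = N - (i : ℕ) := by omega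
        rw [h2, pow_succ]
        ring
      · -- v = X 1
        rcases hv with rfl
        apply Ideal.subset_span
        refine ⟨⟨(i : ℕ), by omega⟩, ?_⟩
        show (X 0 : MvPolynomial (Fin 2) R) ^ (i : ℕ) * (X 1) ^ (N + 1 - (i : ℕ)) = _
        have hi : (i : ℕ) ≤ N := by omega
        have h2 : N + 1 - (i : ℕ) = (N - (i : ℕ)) + 1 := by omega
        rw [h2, pow_succ]
        ring

variable {m : ℕ} (α : Fin m → ℕ)

/-- The ideal generated by the `x^{α j} - y^{α j}`. -/
noncomputable def II : Ideal (MvPolynomial (Fin 2) R) :=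
  Ideal.span (Set.range fun j => P R (α j))

/-- Semigroup lemma with degree bookkeeping. -/
lemma ps (b : ℕ) (hb : ∀ j, α j ≤ b) {n : ℕ}
    (hn : n ∈ AddSubmonoid.closure (Set.range α)) :
    ∀ (e : ℕ) (g : MvPolynomial (Fin 2) R), g ∈ mm R ^ e →
      P R n * g ∈ II R α * mm R ^ (e + n - b) := by
  induction hn using AddSubmonoid.closure_induction with
  | mem x hx =>
      obtain ⟨j, rfl⟩ := hx
      intro e g hg
      refine Ideal.mul_mem_mul (Ideal.subset_span ⟨j, rfl⟩) ?_
      exact Ideal.pow_le_pow_right (by have := hb j; omega) hg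
  | zero =>
      intro e g hg
      rw [P_zero, zero_mul]
      exact zero_mem _
  | add n₁ n₂ h₁ h₂ ih₁ ih₂ =>
      intro e g hg
      rw [P_add, add_mul]
      have hx2 : (X 0 : MvPolynomial (Fin 2) R) ^ n₂ * g ∈ mm R ^ (n₂ + e) := by
        rw [pow_add]
        exact Ideal.mul_mem_mul (Ideal.pow_mem_pow (Ideal.subset_span (by simp)) n₂) hg
      have hy1 : (X 1 : MvPolynomial (Fin 2) R) ^ n₁ * g ∈ mm R ^ (n₁ + e) := by
        rw [pow_add]
        exact Ideal.mul_mem_mul (Ideal.pow_mem_pow (Ideal.subset_span (by simp)) n₁) hg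
      have e₁ : (n₂ + e) + n₁ - b = e + (n₁ + n₂) - b := by omega
      have e₂ : (n₁ + e) + n₂ - b = e + (n₁ + n₂) - b := by omega
      have t₁ := ih₁ (n₂ + e) _ hx2
      have t₂ := ih₂ (n₁ + e) _ hy1
      rw [e₁] at t₁
      rw [e₂] at t₂
      have r₁ : (X 0 : MvPolynomial (Fin 2) R) ^ n₂ * P R n₁ * g = P R n₁ * ((X 0) ^ n₂ * g) := by ring
      have r₂ : (X 1 : MvPolynomial (Fin 2) R) ^ n₁ * P R n₂ * g = P R n₂ * ((X 1) ^ n₁ * g) := by ring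
      rw [r₁, r₂]
      exact add_mem t₁ t₂

lemma bezout : ∃ s t : ℕ, s ∈ AddSubmonoid.closure (Set.range α) ∧
    t ∈ AddSubmonoid.closure (Set.range α) ∧ s = t + Finset.univ.gcd α := by
  classical
  set C := AddSubmonoid.closure (Set.range α) with hC
  set G := AddSubgroup.closure (Set.range fun j => (α j : ℤ)) with hG
  have key : ∀ z ∈ G, ∃ s t : ℕ, s ∈ C ∧ t ∈ C ∧ z = (s : ℤ) - (t : ℤ) := by
    intro z hz
    induction hz using AddSubgroup.closure_induction with
    | mem x hx =>
        obtain ⟨j, rfl⟩ := hx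
        exact ⟨α j, 0, AddSubmonoid.subset_closure ⟨j, rfl⟩, zero_mem _, by simp⟩
    | zero => exact ⟨0, 0, zero_mem _, zero_mem _, by simp⟩
    | add a b _ _ iha ihb =>
        obtain ⟨s₁, t₁, hs₁, ht₁, rfl⟩ := iha
        obtain ⟨s₂, t₂, hs₂, ht₂, rfl⟩ := ihb
        exact ⟨s₁ + s₂, t₁ + t₂, add_mem hs₁ hs₂, add_mem ht₁ ht₂, by push_cast; ring⟩
    | neg a _ iha =>
        obtain ⟨s₁, t₁, hs₁, ht₁, rfl⟩ := iha
        exact ⟨t₁, s₁, ht₁, hs₁, by ring⟩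
  have hzmem : ∀ (c : ℤ) (z : ℤ), z ∈ G → c * z ∈ G := by
    intro c z hz
    have := AddSubgroup.zsmul_mem G hz c
    simpa [zsmul_eq_mul] using this
  have hgcd : ∀ F : Finset (Fin m), ((F.gcd α : ℕ) : ℤ) ∈ G := by
    intro F
    induction F using Finset.induction with
    | empty =>
        rw [Finset.gcd_empty]
        simpa using zero_mem G
    | @insert j F' hnotmem ih =>
        rw [Finset.gcd_insert]
        have hj : ((α j : ℕ) : ℤ) ∈ G := AddSubgroup.subset_closure ⟨j, rfl⟩
        -- gcd in ℕ equals Nat.gcd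
        have hgg : GCDMonoid.gcd (α j) (F'.gcd α) = Nat.gcd (α j) (F'.gcd α) := rfl
        have : ((GCDMonoid.gcd (α j) (F'.gcd α) : ℕ) : ℤ) =
            (α j : ℤ) * Nat.gcdA (α j) (F'.gcd α) + ((F'.gcd α : ℕ) : ℤ) * Nat.gcdB (α j) (F'.gcd α) := by
          rw [hgg]
          exact Nat.gcd_eq_gcd_ab (α j) (F'.gcd α)
        rw [this]
        exact add_mem (by simpa [mul_comm] using hzmem _ _ hj) (by simpa [mul_comm] using hzmem _ _ ih)
  obtain ⟨s, t, hs, ht, heq⟩ := key _ (hgcd Finset.univ)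
  exact ⟨s, t, hs, ht, by omega⟩


/-- Multiplication by `x^c * (x^d - y^d)` is injective when `d ≠ 0`. -/
lemma regular_aux [Nontrivial R] (c d : ℕ) (hd : d ≠ 0) (q : MvPolynomial (Fin 2) R)
    (h : q * ((X 0 : MvPolynomial (Fin 2) R) ^ c *
      ((X 0 : MvPolynomial (Fin 2) R) ^ d - (X 1 : MvPolynomial (Fin 2) R) ^ d)) = 0) :
    q = 0 := by
  set φ : MvPolynomial (Fin 2) R ≃ₐ[R] Polynomial (MvPolynomial (Fin 1) R) :=
    MvPolynomial.finSuccEquiv R 1 with hφdef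
  have h1 : (X 1 : MvPolynomial (Fin 2) R) = X (Fin.succ 0) := rfl
  have himg : φ ((X 0 : MvPolynomial (Fin 2) R) ^ c *
      ((X 0 : MvPolynomial (Fin 2) R) ^ d - (X 1 : MvPolynomial (Fin 2) R) ^ d))
      = Polynomial.X ^ c * (Polynomial.X ^ d -
          Polynomial.C ((X 0 : MvPolynomial (Fin 1) R) ^ d)) := by
    have hy : (MvPolynomial.finSuccEquiv R 1) (X 1 : MvPolynomial (Fin 2) R)
        = Polynomial.C (X 0 : MvPolynomial (Fin 1) R) :=
      MvPolynomial.finSuccEquiv_X_succ (j := (0 : Fin 1))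
    simp [map_mul, map_sub, map_pow, hφdef, finSuccEquiv_X_zero, hy]
  have hmon : (Polynomial.X ^ c * (Polynomial.X ^ d -
      Polynomial.C ((X 0 : MvPolynomial (Fin 1) R) ^ d))).Monic := by
    refine (Polynomial.monic_X_pow c).mul (Polynomial.monic_X_pow_sub ?_)
    refine lt_of_le_of_lt Polynomial.degree_C_le ?_
    exact_mod_cast Nat.pos_of_ne_zero hd
  have hmul0 : φ q * (Polynomial.X ^ c * (Polynomial.X ^ d -
      Polynomial.C ((X 0 : MvPolynomial (Fin 1) R) ^ d))) = 0 := by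
    rw [← himg, ← map_mul, h, map_zero]
  have hq0 : φ q = 0 := by
    have hz : φ q * (Polynomial.X ^ c * (Polynomial.X ^ d -
        Polynomial.C ((X 0 : MvPolynomial (Fin 1) R) ^ d)))
        = 0 * (Polynomial.X ^ c * (Polynomial.X ^ d -
        Polynomial.C ((X 0 : MvPolynomial (Fin 1) R) ^ d))) := by
      rw [zero_mul]
      exact hmul0
    exact hmon.isRegular.right hz
  have := congrArg φ.symm hq0
  simpa using this

end PowDiffAux


theorem pow_diff_mem_integralClosure_polynomial (R : Type*) [CommRing R] [IsNoetherianRing R]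
    (m : ℕ) (hm : 0 < m) (α : Fin m → ℕ) (hα : StrictMono α) :
    MemIdealIntegralClosure
      (Ideal.span (Set.range fun i =>
        (X 0 : MvPolynomial (Fin 2) R) ^ (α i) - (X 1 : MvPolynomial (Fin 2) R) ^ (α i)))
      ((X 0 : MvPolynomial (Fin 2) R) ^ (α ⟨m - 1, by omega⟩ + Finset.univ.gcd α) -
        (X 1 : MvPolynomial (Fin 2) R) ^ (α ⟨m - 1, by omega⟩ + Finset.univ.gcd α)) := by
  classical
  rcases subsingleton_or_nontrivial R with hR | hR
  · haveI : Subsingleton (MvPolynomial (Fin 2) R) := Module.subsingleton R _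
    exact ⟨1, one_pos, fun _ => 0, fun i => zero_mem _, Subsingleton.elim _ _⟩
  by_cases hd0 : Finset.univ.gcd α = 0
  · have hall : α ⟨m - 1, by omega⟩ = 0 := by
      have := Finset.gcd_eq_zero_iff.mp hd0 ⟨m - 1, by omega⟩ (Finset.mem_univ _)
      exact this
    refine ⟨1, one_pos, fun _ => 0, fun i => zero_mem _, ?_⟩
    rw [hall, hd0]
    simp
  -- main case
  obtain ⟨s, t, hs, ht, hst⟩ := PowDiffAux.bezout α
  set A := MvPolynomial (Fin 2) R with hA
  set a : ℕ := α ⟨m - 1, by omega⟩ with ha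
  set d : ℕ := Finset.univ.gcd α with hd
  set I : Ideal A := PowDiffAux.II R α with hI
  set 𝔪 : Ideal A := PowDiffAux.mm R with h𝔪
  set T : A := PowDiffAux.P R (a + d) with hT
  have hmax : ∀ j, α j ≤ a := by
    intro j
    refine hα.monotone ?_
    rw [Fin.le_def]
    have := j.isLt
    simp only []
    omega
  have hb : ∀ j, α j ≤ a + d := fun j => le_trans (hmax j) (Nat.le_add_right _ _)
  have hPa : PowDiffAux.P R a ∈ I := Ideal.subset_span ⟨⟨m - 1, by omega⟩, rfl⟩
  -- the module
  set g : Fin (2 * t + 1) → A :=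
    (fun i => (X 0 : A) ^ (i : ℕ) * (X 1 : A) ^ (2 * t - (i : ℕ)) * PowDiffAux.P R d) with hg
  set M : Ideal A := Ideal.span (Set.range g) with hM
  -- x^t P d and y^t P d identities
  have hPadd := PowDiffAux.P_add (R := R)
  have hxt : (X 0 : A) ^ t * PowDiffAux.P R d = PowDiffAux.P R s - (X 1 : A) ^ d * PowDiffAux.P R t := by
    rw [hst, show t + d = d + t by omega]
    linear_combination (-1 : A) * hPadd d t
  have hyt : (X 1 : A) ^ t * PowDiffAux.P R d = PowDiffAux.P R s - (X 0 : A) ^ d * PowDiffAux.P R t := by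
    rw [hst]
    linear_combination (-1 : A) * hPadd t d
  -- key monomial membership
  have ms : ∀ i : ℕ, i ≤ 2 * t →
      (X 0 : A) ^ (a + i) * (X 1 : A) ^ (2 * t - i) * PowDiffAux.P R d ∈ I * 𝔪 ^ (2 * t) := by
    intro i hi
    by_cases hit : t ≤ i
    · have e1 : (X 0 : A) ^ (a + i) * (X 1 : A) ^ (2 * t - i) * PowDiffAux.P R d
          = ((X 0 : A) ^ (a + i - t) * (X 1 : A) ^ (2 * t - i)) * ((X 0 : A) ^ t * PowDiffAux.P R d) := by
        have hsplit : (X 0 : A) ^ (a + i) = (X 0 : A) ^ (a + i - t) * (X 0 : A) ^ t := by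
          rw [← pow_add]
          congr 1
          omega
        rw [hsplit]
        ring
      rw [e1, hxt, mul_sub]
      refine sub_mem ?_ ?_
      · have hmon := PowDiffAux.mon_mem R (a + i - t) (2 * t - i)
        rw [show (a + i - t) + (2 * t - i) = a + t by omega] at hmon
        have hps := PowDiffAux.ps R α (a + d) hb hs (a + t) _ hmon
        rw [show (a + t) + s - (a + d) = 2 * t by omega] at hps
        rwa [mul_comm (PowDiffAux.P R s)] at hps
      · have hmon := PowDiffAux.mon_mem R (a + i - t) ((2 * t - i) + d)
        rw [show (a + i - t) + ((2 * t - i) + d) = a + t + d by omega] at hmon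
        have hps := PowDiffAux.ps R α (a + d) hb ht (a + t + d) _ hmon
        rw [show (a + t + d) + t - (a + d) = 2 * t by omega] at hps
        have e2 : ((X 0 : A) ^ (a + i - t) * (X 1 : A) ^ (2 * t - i)) * ((X 1 : A) ^ d * PowDiffAux.P R t)
            = PowDiffAux.P R t * ((X 0 : A) ^ (a + i - t) * (X 1 : A) ^ ((2 * t - i) + d)) := by
          rw [pow_add]
          ring
        rw [e2]
        exact hps
    · have e1 : (X 0 : A) ^ (a + i) * (X 1 : A) ^ (2 * t - i) * PowDiffAux.P R d
          = ((X 0 : A) ^ (a + i) * (X 1 : A) ^ (t - i)) * ((X 1 : A) ^ t * PowDiffAux.P R d) := by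
        have hsplit : (X 1 : A) ^ (2 * t - i) = (X 1 : A) ^ (t - i) * (X 1 : A) ^ t := by
          rw [← pow_add]
          congr 1
          omega
        rw [hsplit]
        ring
      rw [e1, hyt, mul_sub]
      refine sub_mem ?_ ?_
      · have hmon := PowDiffAux.mon_mem R (a + i) (t - i)
        rw [show (a + i) + (t - i) = a + t by omega] at hmon
        have hps := PowDiffAux.ps R α (a + d) hb hs (a + t) _ hmon
        rw [show (a + t) + s - (a + d) = 2 * t by omega] at hps
        rwa [mul_comm (PowDiffAux.P R s)] at hps
      · have hmon := PowDiffAux.mon_mem R ((a + i) + d) (t - i)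
        rw [show ((a + i) + d) + (t - i) = a + t + d by omega] at hmon
        have hps := PowDiffAux.ps R α (a + d) hb ht (a + t + d) _ hmon
        rw [show (a + t + d) + t - (a + d) = 2 * t by omega] at hps
        have e2 : ((X 0 : A) ^ (a + i) * (X 1 : A) ^ (t - i)) * ((X 0 : A) ^ d * PowDiffAux.P R t)
            = PowDiffAux.P R t * ((X 0 : A) ^ ((a + i) + d) * (X 1 : A) ^ (t - i)) := by
          rw [pow_add]
          ring
        rw [e2]
        exact hps
  -- 𝔪^{2t} * (P d) ≤ M
  have hSC : 𝔪 ^ (2 * t) * Ideal.span {PowDiffAux.P R d} ≤ M := by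
    refine le_trans (Ideal.mul_mono (PowDiffAux.mpow_le R (2 * t)) le_rfl) ?_
    rw [Ideal.span_mul_span']
    rw [Ideal.span_le]
    rintro z ⟨u, ⟨i, rfl⟩, v, hv, rfl⟩
    rcases Set.mem_singleton_iff.mp hv with rfl
    exact Ideal.subset_span ⟨i, rfl⟩
  have hIM : I * 𝔪 ^ (2 * t) * Ideal.span {PowDiffAux.P R d} ≤ I * M := by
    rw [mul_assoc]
    exact Ideal.mul_mono le_rfl hSC
  -- T = x^a P d + y^d P a
  have hTsplit : T = (X 0 : A) ^ a * PowDiffAux.P R d + (X 1 : A) ^ d * PowDiffAux.P R a := by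
    rw [hT, show a + d = d + a by omega]
    exact hPadd d a
  -- T * generator ∈ I * M
  have hTgen : ∀ i : Fin (2 * t + 1), T * g i ∈ I * M := by
    intro i
    have e : T * g i = ((X 0 : A) ^ (a + (i : ℕ)) * (X 1 : A) ^ (2 * t - (i : ℕ)) * PowDiffAux.P R d)
          * PowDiffAux.P R d
        + PowDiffAux.P R a * ((X 1 : A) ^ d * g i) := by
      have hgi : g i = (X 0 : A) ^ (i : ℕ) * (X 1 : A) ^ (2 * t - (i : ℕ)) * PowDiffAux.P R d := rfl
      rw [hgi, hTsplit, pow_add]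
      ring
    rw [e]
    refine add_mem ?_ ?_
    · refine hIM ?_
      exact Ideal.mul_mem_mul (ms (i : ℕ) (by omega)) (Ideal.subset_span rfl)
    · refine Ideal.mul_mem_mul hPa ?_
      exact Ideal.mul_mem_left M _ (Ideal.subset_span ⟨i, rfl⟩)
  -- T * M ≤ I * M
  have hTM : ∀ w ∈ M, T * w ∈ I * M := by
    intro w hw
    induction hw using Submodule.span_induction with
    | mem w hw =>
        obtain ⟨i, rfl⟩ := hw
        exact hTgen i
    | zero => rw [mul_zero]; exact zero_mem _
    | add u v hu hv ihu ihv => rw [mul_add]; exact add_mem ihu ihv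
    | smul r u hu ihu =>
        rw [smul_eq_mul, mul_comm r u, ← mul_assoc]
        exact Ideal.mul_mem_right r _ ihu
  -- set up the endomorphism
  haveI : Module.Finite A ↥M := Module.Finite.iff_fg.mpr (Submodule.fg_span (Set.finite_range g))
  have hres : ∀ w : A, w ∈ M → (LinearMap.lsmul A A T) w ∈ M := by
    intro w hw
    exact Ideal.mul_mem_left M T hw
  set f : ↥M →ₗ[A] ↥M := (LinearMap.lsmul A A T).restrict hres with hf
  have hfval : ∀ w : ↥M, ((f w : A)) = T * (w : A) := fun w => rfl
  have hrange : LinearMap.range f ≤ I • (⊤ : Submodule A ↥M) := by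
    rintro z ⟨w, rfl⟩
    rw [Submodule.mem_smul_top_iff]
    rw [hfval w, Ideal.smul_eq_mul]
    exact hTM _ w.2
  obtain ⟨p, hmonic, -, hcoeff, heval⟩ :=
    LinearMap.exists_monic_and_coeff_mem_pow_and_aeval_eq_zero_of_range_le_smul A f I hrange
  -- evaluate at m₀
  set m₀ : ↥M := ⟨g ⟨2 * t, by omega⟩, Ideal.subset_span ⟨⟨2 * t, by omega⟩, rfl⟩⟩ with hm₀
  have fk : ∀ (k : ℕ) (w : ↥M), (((f ^ k) w : A)) = T ^ k * (w : A) := by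
    intro k
    induction k with
    | zero => intro w; simp
    | succ k ih =>
        intro w
        rw [pow_succ, Module.End.mul_apply, ih (f w), hfval w, pow_succ]
        ring
  have h1 : (((Polynomial.aeval f p) m₀ : A)) = (Polynomial.aeval T p) * (m₀ : A) := by
    rw [Polynomial.aeval_eq_sum_range, Polynomial.aeval_eq_sum_range]
    rw [LinearMap.sum_apply, AddSubmonoidClass.coe_finset_sum, Finset.sum_mul]
    refine Finset.sum_congr rfl fun i _ => ?_
    rw [LinearMap.smul_apply, SetLike.val_smul, smul_eq_mul, smul_eq_mul, fk i m₀]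
    ring
  have h0 : (Polynomial.aeval T p) * (m₀ : A) = 0 := by
    rw [← h1, heval]
    rfl
  have hm₀val : (m₀ : A) = (X 0 : A) ^ (2 * t) * ((X 0 : A) ^ d - (X 1 : A) ^ d) := by
    have : (m₀ : A) = (X 0 : A) ^ (2 * t) * (X 1 : A) ^ (2 * t - 2 * t) * PowDiffAux.P R d := rfl
    rw [this, Nat.sub_self, pow_zero, mul_one]
    rfl
  have hQ : Polynomial.aeval T p = 0 := by
    refine PowDiffAux.regular_aux R (2 * t) d hd0 _ ?_
    rw [← hm₀val]
    exact h0
  -- n positive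
  set n : ℕ := p.natDegree with hn
  have hnpos : 0 < n := by
    rcases Nat.eq_zero_or_pos n with h | h
    · exfalso
      have hp1 : p = 1 := (hmonic.natDegree_eq_zero).mp h
      rw [hp1, map_one] at hQ
      exact one_ne_zero hQ
    · exact h
  refine ⟨n, hnpos, fun i => if i ≤ n then p.coeff (n - i) else 0, ?_, ?_⟩
  · intro i
    dsimp only
    by_cases hin : i ≤ n
    · rw [if_pos hin]
      have := hcoeff (n - i)
      rw [show p.natDegree - (n - i) = i by omega] at this
      exact this
    · rw [if_neg hin]
      exact zero_mem _
  · have hsum2 : ∑ i ∈ Finset.range (n + 1), p.coeff i * T ^ i = 0 := by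
      have h2 := hQ
      rw [Polynomial.aeval_eq_sum_range] at h2
      simpa [smul_eq_mul] using h2
    rw [Finset.sum_range_succ, hmonic.coeff_natDegree, one_mul] at hsum2
    have hcc : ∀ i ∈ Finset.range n,
        (if i + 1 ≤ n then p.coeff (n - (i + 1)) else 0) * T ^ (n - (i + 1))
          = p.coeff (n - 1 - i) * T ^ (n - 1 - i) := by
      intro i hi
      rw [Finset.mem_range] at hi
      rw [if_pos (by omega : i + 1 ≤ n), show n - (i + 1) = n - 1 - i by omega]
    have hgoal : T ^ n + ∑ i ∈ Finset.range n,
        (if i + 1 ≤ n then p.coeff (n - (i + 1)) else 0) * T ^ (n - (i + 1)) = 0 := by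
      rw [Finset.sum_congr rfl hcc,
        Finset.sum_range_reflect (fun j => p.coeff j * T ^ j) n]
      linear_combination hsum2
    exact hgoal
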